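/- Right nullspace inclusions between F_Φ^P and pencils in 𝕄₁(P): let P(λ) be regular and ℒ(λ) ∈ 𝕄₁(P). Then: (1) for every α ∈ ℂ, every u ∈ ℂ^{kn} with F_Φ^P(α)u = 0 also satisfies ℒ(α)u = 0, and every u with (rev₁ F_Φ^P)(0)u = 0 also satisfies (rev₁ ℒ)(0)u = 0; (2) if moreover ℒ(λ) is a linearization of P(λ), then these inclusions are equalities, i.e., for every α ∈ ℂ, ℒ(α)u = 0 implies F_Φ^P(α)u = 0, and (rev₁ ℒ)(0)u = 0 implies (rev₁ F_Φ^P)(0)u = 0. -/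

import Mathlib

open Polynomial Matrix

noncomputable section

/-- `Φ_k(λ) ⊗ I_n` as a `kn × n` polynomial matrix: its `i`-th block row (0-based)
is `φ_{k-1-i}(λ) I_n`. -/
def PhiMat (n k : ℕ) (φ : ℕ → Polynomial ℝ) :
    Matrix (Fin k × Fin n) (Fin n) (Polynomial ℝ) :=
  Matrix.of fun p s => if p.2 = s then φ (k - 1 - p.1.val) else 0

/-- The matrix polynomial `P(λ) = Σ_{i=0}^k P_i φ_i(λ)`. -/
def matP (n k : ℕ) (φ : ℕ → Polynomial ℝ) (Pm : ℕ → Matrix (Fin n) (Fin n) ℝ) :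
    Matrix (Fin n) (Fin n) (Polynomial ℝ) :=
  Matrix.of fun r s => ∑ i ∈ Finset.range (k + 1), C (Pm i r s) * φ i

/-- `v ⊗ Q` as a `kn × n` polynomial matrix. -/
def vKron (n k : ℕ) (v : Fin k → ℝ) (Q : Matrix (Fin n) (Fin n) (Polynomial ℝ)) :
    Matrix (Fin k × Fin n) (Fin n) (Polynomial ℝ) :=
  Matrix.of fun p s => C (v p.1) * Q p.2 s

/-- `v^T ⊗ Q` as an `n × kn` polynomial matrix. -/
def vKronRow (n k : ℕ) (v : Fin k → ℝ) (Q : Matrix (Fin n) (Fin n) (Polynomial ℝ)) :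
    Matrix (Fin n) (Fin k × Fin n) (Polynomial ℝ) :=
  Matrix.of fun s q => C (v q.1) * Q s q.2

/-- A matrix pencil: a matrix polynomial each of whose entries has degree at most `1`. -/
def IsPencil {m m' : Type*} (L : Matrix m m' (Polynomial ℝ)) : Prop :=
  ∀ p q, (L p q).degree ≤ 1

/-- `ℒ(λ) ∈ 𝕄₁(P)` with ansatz vector `v`, i.e. `ℒ(λ)(Φ_k(λ) ⊗ I_n) = v ⊗ P(λ)`. -/
def Ansatz1 (n k : ℕ) (φ : ℕ → Polynomial ℝ) (Pm : ℕ → Matrix (Fin n) (Fin n) ℝ)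
    (L : Matrix (Fin k × Fin n) (Fin k × Fin n) (Polynomial ℝ)) (v : Fin k → ℝ) : Prop :=
  L * PhiMat n k φ = vKron n k v (matP n k φ Pm)

/-- `ℒ(λ) ∈ 𝕄₂(P)` with ansatz vector `w`, i.e. `(Φ_k(λ)^T ⊗ I_n) ℒ(λ) = w^T ⊗ P(λ)`. -/
def Ansatz2 (n k : ℕ) (φ : ℕ → Polynomial ℝ) (Pm : ℕ → Matrix (Fin n) (Fin n) ℝ)
    (L : Matrix (Fin k × Fin n) (Fin k × Fin n) (Polynomial ℝ)) (w : Fin k → ℝ) : Prop :=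
  (PhiMat n k φ)ᵀ * L = vKronRow n k w (matP n k φ Pm)

/-- The anchor pencil `F_Φ^P(λ) = [m_Φ^P(λ); M_Φ(λ)]`. -/
def FPhi (n k : ℕ) (a b c : ℕ → ℝ) (Pm : ℕ → Matrix (Fin n) (Fin n) ℝ) :
    Matrix (Fin k × Fin n) (Fin k × Fin n) (Polynomial ℝ) :=
  Matrix.of fun p q =>
    if p.1.val = 0 then
      -- the block row m_Φ^P(λ)
      if q.1.val = 0 then
        C ((a (k - 1))⁻¹) * (X - C (b (k - 1))) * C (Pm k p.2 q.2) + C (Pm (k - 1) p.2 q.2)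
      else if q.1.val = 1 then
        C (Pm (k - 2) p.2 q.2) - C (c (k - 1) / a (k - 1)) * C (Pm k p.2 q.2)
      else
        C (Pm (k - 1 - q.1.val) p.2 q.2)
    else
      -- the block rows M_Φ(λ) = M_Φ^⋆(λ) ⊗ I_n
      (if q.1.val + 1 = p.1.val then -C (a (k - 1 - p.1.val))
       else if q.1.val = p.1.val then X - C (b (k - 1 - p.1.val))
       else if q.1.val = p.1.val + 1 then -C (c (k - 1 - p.1.val))
       else 0) * (if p.2 = q.2 then 1 else 0)

/-- The `kn × kn` real matrix `[v ⊗ I_n, B]`: first `n` columns form `v ⊗ I_n`,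
the remaining `(k-1)n` columns form `B`. -/
def extCols (n k : ℕ) (v : Fin k → ℝ)
    (B : Matrix (Fin k × Fin n) (Fin (k - 1) × Fin n) ℝ) :
    Matrix (Fin k × Fin n) (Fin k × Fin n) ℝ :=
  Matrix.of fun p q =>
    if h : q.1.val = 0 then (if p.2 = q.2 then v p.1 else 0)
    else B p (⟨q.1.val - 1, by have := q.1.isLt; omega⟩, q.2)

/-- The `kn × kn` real matrix `[w^T ⊗ I_n; B]`: first `n` rows form `w^T ⊗ I_n`,
the remaining `(k-1)n` rows form `B`. -/
def extRows (n k : ℕ) (w : Fin k → ℝ)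
    (B : Matrix (Fin (k - 1) × Fin n) (Fin k × Fin n) ℝ) :
    Matrix (Fin k × Fin n) (Fin k × Fin n) ℝ :=
  Matrix.of fun p q =>
    if h : p.1.val = 0 then (if p.2 = q.2 then w q.1 else 0)
    else B (⟨p.1.val - 1, by have := p.1.isLt; omega⟩, p.2) q

/-- A real matrix viewed as a constant matrix polynomial. -/
def liftC {m m' : Type*} (A : Matrix m m' ℝ) : Matrix m m' (Polynomial ℝ) :=
  A.map C

/-- Block transpose of a matrix consisting of `n × n` blocks: block `(i,j)` of `A^𝓑`
is block `(j,i)` of `A`. -/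
def blockTr {n k1 k2 : ℕ} {R : Type*} (A : Matrix (Fin k1 × Fin n) (Fin k2 × Fin n) R) :
    Matrix (Fin k2 × Fin n) (Fin k1 × Fin n) R :=
  Matrix.of fun p q => A (q.1, p.2) (p.1, q.2)

/-- `rev_d Q(λ) = λ^d Q(1/λ)`, entrywise reversal of a matrix polynomial of degree at most `d`. -/
def revMat {m m' : Type*} (d : ℕ) (L : Matrix m m' (Polynomial ℝ)) :
    Matrix m m' (Polynomial ℝ) :=
  Matrix.of fun p q => (L p q).reflect d

/-- Evaluation of a real matrix polynomial at a complex number. -/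
def evalC {m m' : Type*} (α : ℂ) (L : Matrix m m' (Polynomial ℝ)) : Matrix m m' ℂ :=
  Matrix.of fun p q => aeval α (L p q)

/-- A matrix polynomial viewed as a matrix over the field `ℝ(λ)` of rational functions. -/
def liftRat {m m' : Type*} (L : Matrix m m' (Polynomial ℝ)) : Matrix m m' (RatFunc ℝ) :=
  L.map (algebraMap (Polynomial ℝ) (RatFunc ℝ))

/-- `v ⊗ I_n` as a `kn × n` complex matrix. -/
def vKronC (n k : ℕ) (v : Fin k → ℝ) : Matrix (Fin k × Fin n) (Fin n) ℂ :=
  Matrix.of fun p s => if p.2 = s then (v p.1 : ℂ) else 0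

/-- `v ⊗ I_n` as a `kn × n` matrix over `ℝ(λ)`. -/
def vKronRat (n k : ℕ) (v : Fin k → ℝ) : Matrix (Fin k × Fin n) (Fin n) (RatFunc ℝ) :=
  Matrix.of fun p s => if p.2 = s then RatFunc.C (v p.1) else 0

/-- The pencil `Xm λ + Ym` as a matrix polynomial. -/
def pencilPoly {m : Type*} (Xm Ym : Matrix m m ℝ) : Matrix m m (Polynomial ℝ) :=
  Matrix.of fun p q => C (Xm p q) * X + C (Ym p q)

/-- `diag(P(λ), I_{(k-1)n})` as a `kn × kn` matrix polynomial. -/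
def diagPI (n k : ℕ) (Pp : Matrix (Fin n) (Fin n) (Polynomial ℝ)) :
    Matrix (Fin k × Fin n) (Fin k × Fin n) (Polynomial ℝ) :=
  Matrix.of fun p q =>
    if p.1.val = 0 ∧ q.1.val = 0 then Pp p.2 q.2 else if p = q then 1 else 0

/-- `ℒ(λ)` is a linearization of `P(λ)`: there are `U(λ), V(λ)` with nonzero real constant
determinants such that `U(λ)ℒ(λ)V(λ) = diag(P(λ), I_{(k-1)n})`. -/
def IsLinearization (n k : ℕ)
    (L : Matrix (Fin k × Fin n) (Fin k × Fin n) (Polynomial ℝ))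
    (Pp : Matrix (Fin n) (Fin n) (Polynomial ℝ)) : Prop :=
  ∃ U V : Matrix (Fin k × Fin n) (Fin k × Fin n) (Polynomial ℝ),
    (∃ cu : ℝ, cu ≠ 0 ∧ U.det = C cu) ∧ (∃ cv : ℝ, cv ≠ 0 ∧ V.det = C cv) ∧
    U * L * V = diagPI n k Pp

/-- `ℒ(λ)` is a strong linearization of `P(λ)` (of degree `k`): it is a linearization and
`rev₁ ℒ(λ)` is a linearization of `rev_k P(λ)`. -/
def IsStrongLin (n k : ℕ)
    (L : Matrix (Fin k × Fin n) (Fin k × Fin n) (Polynomial ℝ))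
    (Pp : Matrix (Fin n) (Fin n) (Polynomial ℝ)) : Prop :=
  IsLinearization n k L Pp ∧ IsLinearization n k (revMat 1 L) (revMat k Pp)


/-!
Every `ℒ ∈ 𝕄₁(P)` factors as `ℒ(λ) = E F_Φ^P(λ)` with a constant matrix `E = [v ⊗ I_n, B]`:
row by row, `ℒ - (v ⊗ I_n) m_Φ^P` is a pencil annihilating `Φ_k ⊗ I_n`, and a row of linear
polynomials annihilating `Φ_k` is a real combination of the rows of `M_Φ^⋆` (the coefficient of
`φ_{k-1}` must be constant by a degree count, and the three-term recurrence lets one clear it).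
A constant left factor maps right null vectors of `F_Φ^P(α)` to those of `ℒ(α)`, and it commutes
with `rev₁`. If `ℒ` is a linearization then `det ℒ` is a nonzero constant times `det P ≠ 0`, so
`E` is invertible and `F_Φ^P = E⁻¹ ℒ` gives the reverse inclusions.
-/

structure IsThreeTermRecurrence (a b c : ℕ → ℝ) (φ : ℕ → ℝ[X]) : Prop where
  zero : φ 0 = 1
  one : C (a 0) * φ 1 = (X - C (b 0)) * φ 0
  succ_succ : ∀ j, C (a (j + 1)) * φ (j + 2) =
    (X - C (b (j + 1))) * φ (j + 1) - C (c (j + 1)) * φ j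

namespace IsThreeTermRecurrence

variable {a b c : ℕ → ℝ} {φ : ℕ → ℝ[X]}

theorem degree_eq (hφ : IsThreeTermRecurrence a b c φ) (ha : ∀ j, a j ≠ 0) (j : ℕ) :
    (φ j).degree = j := by
  induction j using Nat.strong_induction_on with
  | _ j ih =>
    match j, ih with
    | 0, _ => simp [hφ.zero]
    | 1, _ =>
      have h := congrArg degree hφ.one
      rwa [degree_C_mul (ha 0), hφ.zero, mul_one, degree_X_sub_C] at h
    | j + 2, ih =>
      have h := congrArg degree (hφ.succ_succ j)
      have hlead : ((X - C (b (j + 1))) * φ (j + 1)).degree = ↑(j + 2) := by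
        rw [degree_mul, degree_X_sub_C, ih (j + 1) (by omega)]; norm_cast; ring
      rwa [degree_C_mul (ha _), degree_sub_eq_left_of_degree_lt, hlead] at h
      rw [hlead]
      calc (C (c (j + 1)) * φ j).degree ≤ 0 + ↑j :=
            (degree_mul_le _ _).trans (add_le_add degree_C_le (ih j (by omega)).le)
        _ < ↑(j + 2) := by rw [zero_add]; exact_mod_cast (by omega : j < j + 2)

theorem natDegree_eq (hφ : IsThreeTermRecurrence a b c φ) (ha : ∀ j, a j ≠ 0) (j : ℕ) :
    (φ j).natDegree = j :=
  natDegree_eq_of_degree_eq_some (hφ.degree_eq ha j)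

theorem ne_zero (hφ : IsThreeTermRecurrence a b c φ) (ha : ∀ j, a j ≠ 0) (j : ℕ) :
    φ j ≠ 0 :=
  fun h => by simpa [h] using hφ.degree_eq ha j

end IsThreeTermRecurrence

/-- The paper's `M_Φ^⋆` for `k = K + 1`. -/
def MStar (a b c : ℕ → ℝ) (K : ℕ) : Matrix (Fin K) (Fin (K + 1)) ℝ[X] :=
  Matrix.of fun i j =>
    if j.val = i.val then -C (a (K - 1 - i))
    else if j.val = i.val + 1 then X - C (b (K - 1 - i))
    else if j.val = i.val + 2 then -C (c (K - 1 - i))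
    else 0

/-- `Φ_{K+1}(λ) = [φ_K, …, φ_0]`. -/
def phiVec (φ : ℕ → ℝ[X]) (K : ℕ) : Fin (K + 1) → ℝ[X] :=
  fun j => φ (K - j)

section MStar

variable {a b c : ℕ → ℝ} {φ : ℕ → ℝ[X]} {K : ℕ}

@[simp]
theorem phiVec_zero : phiVec φ K 0 = φ K := rfl

@[simp]
theorem phiVec_succ (j : Fin (K + 1)) : phiVec φ (K + 1) j.succ = phiVec φ K j := by
  simp [phiVec]

theorem MStar_succ_succ (i : Fin K) (j : Fin (K + 1)) :
    MStar a b c (K + 1) i.succ j.succ = MStar a b c K i j := by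
  have h : K - (i + 1) = K - 1 - i := by omega
  simp [MStar, h]

@[simp]
theorem MStar_succ_zero (i : Fin K) : MStar a b c (K + 1) i.succ 0 = 0 := by
  simp [MStar]

@[simp]
theorem MStar_zero_zero : MStar a b c (K + 1) 0 0 = -C (a K) := by
  simp [MStar]

theorem degree_MStar_le (i : Fin K) (j : Fin (K + 1)) : (MStar a b c K i j).degree ≤ 1 := by
  simp only [MStar, Matrix.of_apply]
  split_ifs <;> compute_degree!

theorem MStar_mulVec_phiVec_zero (hφ : IsThreeTermRecurrence a b c φ) :
    (MStar a b c (K + 1) *ᵥ phiVec φ (K + 1)) 0 = 0 := by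
  cases K with
  | zero =>
    simp [mulVec, dotProduct, Fin.sum_univ_two, MStar, phiVec, ← hφ.one]
  | succ K =>
    simp only [mulVec, dotProduct, MStar, add_tsub_cancel_right, of_apply, Fin.coe_ofNat_eq_mod,
      Nat.zero_mod, Fin.val_eq_zero_iff, tsub_zero, zero_add, phiVec, ite_mul, neg_mul, zero_mul,
      Fin.sum_univ_succ, ↓reduceIte, Fin.succ_ne_zero, Fin.val_succ, Nat.add_eq_right,
      Nat.reduceSubDiff, Nat.reduceEqDiff, Finset.sum_ite_eq', Finset.mem_univ]
    linear_combination -hφ.succ_succ K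

theorem exists_eq_C_of_dotProduct_phiVec_eq_zero (hφ : IsThreeTermRecurrence a b c φ)
    (ha : ∀ j, a j ≠ 0) {K : ℕ} {h : Fin (K + 2) → ℝ[X]} (hdeg : ∀ j, (h j).degree ≤ 1)
    (hh : h ⬝ᵥ phiVec φ (K + 1) = 0) : ∃ t, h 0 = C t := by
  refine ⟨(h 0).coeff 0, eq_C_of_natDegree_eq_zero ?_⟩
  by_cases h0 : h 0 = 0
  · simp [h0]
  have htop : h 0 * φ (K + 1) = -∑ j : Fin (K + 1), h j.succ * phiVec φ K j := by
    rw [dotProduct, Fin.sum_univ_succ] at hh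
    simpa [eq_neg_iff_add_eq_zero] using hh
  have hle : (h 0 * φ (K + 1)).natDegree ≤ K + 1 := by
    rw [htop, natDegree_neg]
    refine natDegree_sum_le_of_forall_le _ _ fun j _ => natDegree_mul_le.trans ?_
    have : (h j.succ).natDegree ≤ 1 := natDegree_le_of_degree_le (hdeg j.succ)
    rw [phiVec, hφ.natDegree_eq ha]
    omega
  rw [natDegree_mul h0 (hφ.ne_zero ha _), hφ.natDegree_eq ha] at hle
  omega

theorem exists_eq_vecMul_MStar (hφ : IsThreeTermRecurrence a b c φ) (ha : ∀ j, a j ≠ 0) :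
    ∀ {K : ℕ} {h : Fin (K + 1) → ℝ[X]}, (∀ j, (h j).degree ≤ 1) →
      h ⬝ᵥ phiVec φ K = 0 → ∃ w : Fin K → ℝ, h = (C ∘ w) ᵥ* MStar a b c K
  | 0, h, _, hh => ⟨finZeroElim, by
      funext j
      fin_cases j
      simpa [dotProduct, phiVec, hφ.zero] using hh⟩
  | K + 1, h, hdeg, hh => by
    obtain ⟨t, ht⟩ := exists_eq_C_of_dotProduct_phiVec_eq_zero hφ ha hdeg hh
    -- subtracting a multiple of the first row of `M_Φ^⋆` clears the first entry of `h`
    set h' : Fin (K + 1) → ℝ[X] := fun j => h j.succ + C (t / a K) * MStar a b c (K + 1) 0 j.succ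
    have hdeg' : ∀ j, (h' j).degree ≤ 1 := fun j =>
      (degree_add_le _ _).trans <| max_le (hdeg _) <|
        (degree_mul_le _ _).trans <| by
          simpa using add_le_add (degree_C_le (a := t / a K)) (degree_MStar_le 0 j.succ)
    have hh' : h' ⬝ᵥ phiVec φ K = 0 := by
      have hrow := MStar_mulVec_phiVec_zero (a := a) (b := b) (c := c) (K := K) hφ
      rw [mulVec, dotProduct, Fin.sum_univ_succ] at hrow
      rw [dotProduct, Fin.sum_univ_succ] at hh
      simp only [h', dotProduct, add_mul, Finset.sum_add_distrib, mul_assoc, ← Finset.mul_sum]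
      simp only [phiVec_succ, MStar_zero_zero, phiVec_zero, ht] at hrow hh
      rw [eq_neg_of_add_eq_zero_right hh, eq_neg_of_add_eq_zero_right hrow]
      have hC : C (t / a K) * C (a K) = C t := by rw [← C_mul, div_mul_cancel₀ _ (ha K)]
      linear_combination φ (K + 1) * hC
    obtain ⟨w, hw⟩ := exists_eq_vecMul_MStar hφ ha hdeg' hh'
    refine ⟨Fin.cons (-(t / a K)) w, funext fun j => Fin.cases ?_ (fun j => ?_) j⟩
    · simp [vecMul, dotProduct, Fin.sum_univ_succ, ht, ← C_mul, div_mul_cancel₀ _ (ha K)]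
    · have hj := congrFun hw j
      simp only [h', vecMul, dotProduct, Function.comp] at hj
      simp only [vecMul, dotProduct, Fin.sum_univ_succ, Function.comp, Fin.cons_zero,
        Fin.cons_succ, MStar_succ_succ, map_neg]
      linear_combination hj

end MStar

section Anchor

variable {n K : ℕ} {a b c : ℕ → ℝ} {φ : ℕ → ℝ[X]} {Pm : ℕ → Matrix (Fin n) (Fin n) ℝ}

theorem FPhi_succ_apply (i : Fin K) (j : Fin (K + 1)) (r s : Fin n) :
    FPhi n (K + 1) a b c Pm (i.succ, r) (j, s) = if r = s then MStar a b c K i j else 0 := by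
  have hK : K - (i + 1) = K - 1 - i := by omega
  simp [FPhi, MStar, hK, eq_comm (a := (j : ℕ))]

theorem isPencil_FPhi : IsPencil (FPhi n K a b c Pm) := by
  intro p q
  simp only [FPhi, Matrix.of_apply]
  split_ifs <;> compute_degree!

theorem mul_PhiMat_apply {m : Type*} (M : Matrix m (Fin (K + 1) × Fin n) ℝ[X]) (p : m)
    (s : Fin n) : (M * PhiMat n (K + 1) φ) p s = ∑ j, M p (j, s) * phiVec φ K j := by
  simp [mul_apply, Fintype.sum_prod_type, PhiMat, phiVec]

theorem sum_FPhi_zero_mul_phiVec (hφ : IsThreeTermRecurrence a b c φ) (ha : ∀ j, a j ≠ 0)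
    (hK : 1 ≤ K) (r s : Fin n) :
    ∑ j, FPhi n (K + 1) a b c Pm (0, r) (j, s) * phiVec φ K j = matP n (K + 1) φ Pm r s := by
  obtain ⟨m, rfl⟩ : ∃ m, K = m + 1 := ⟨K - 1, by omega⟩
  have htail : ∑ j : Fin m,
      FPhi n (m + 1 + 1) a b c Pm (0, r) (j.succ.succ, s) * phiVec φ (m + 1) j.succ.succ
      = ∑ i ∈ Finset.range m, C (Pm i r s) * φ i := by
    rw [← Fin.sum_univ_eq_sum_range, ← Equiv.sum_comp Fin.revPerm]
    refine Fintype.sum_congr _ _ fun j => ?_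
    have : m - (m - (j + 1) + 1) = j := by omega
    simp [FPhi, phiVec, this]
  rw [Fin.sum_univ_succ, Fin.sum_univ_succ, htail]
  simp only [FPhi, Fin.val_eq_zero_iff, add_tsub_cancel_right, Nat.reduceSubDiff, mul_ite, mul_one,
    mul_zero, of_apply, ↓reduceIte, phiVec, Fin.coe_ofNat_eq_mod, Nat.zero_mod, tsub_zero,
    Fin.succ_zero_eq_one, one_ne_zero, Nat.one_mod, matP, Finset.sum_range_succ]
  have hinv : C (a (m + 1))⁻¹ * C (a (m + 1)) = 1 := by
    rw [← C_mul, inv_mul_cancel₀ (ha _), C_1]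
  have hdiv : C (c (m + 1) / a (m + 1)) = C (a (m + 1))⁻¹ * C (c (m + 1)) := by
    rw [div_eq_inv_mul, C_mul]
  linear_combination (-C (Pm (m + 2) r s) * φ m) * hdiv
    + (-C (Pm (m + 2) r s) * C (a (m + 1))⁻¹) * hφ.succ_succ m
    + (C (Pm (m + 2) r s) * φ (m + 2)) * hinv

theorem liftC_extCols_mul_FPhi_apply (v : Fin (K + 1) → ℝ)
    (B : Matrix (Fin (K + 1) × Fin n) (Fin (K + 1 - 1) × Fin n) ℝ) (p : Fin (K + 1) × Fin n)
    (j : Fin (K + 1)) (s : Fin n) :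
    (liftC (extCols n (K + 1) v B) * FPhi n (K + 1) a b c Pm) p (j, s) =
      C (v p.1) * FPhi n (K + 1) a b c Pm (0, p.2) (j, s) +
        ((C ∘ fun i => B p (i, s)) ᵥ* MStar a b c K) j := by
  simp [mul_apply, Fintype.sum_prod_type, Fin.sum_univ_succ, liftC, extCols, FPhi_succ_apply,
    vecMul, dotProduct, apply_ite C]

theorem exists_eq_liftC_extCols_mul_FPhi (hφ : IsThreeTermRecurrence a b c φ)
    (ha : ∀ j, a j ≠ 0) (hK : 1 ≤ K) {L : Matrix (Fin (K + 1) × Fin n) (Fin (K + 1) × Fin n) ℝ[X]}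
    (hL : IsPencil L) {v : Fin (K + 1) → ℝ} (hv : Ansatz1 n (K + 1) φ Pm L v) :
    ∃ B, L = liftC (extCols n (K + 1) v B) * FPhi n (K + 1) a b c Pm := by
  have hrow : ∀ p s, ∃ w : Fin K → ℝ,
      (fun j => L p (j, s) - C (v p.1) * FPhi n (K + 1) a b c Pm (0, p.2) (j, s)) =
        (C ∘ w) ᵥ* MStar a b c K := by
    intro p s
    refine exists_eq_vecMul_MStar hφ ha (fun j => ?_) ?_
    · refine (degree_sub_le _ _).trans (max_le (hL _ _) ((degree_mul_le _ _).trans ?_))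
      simpa using add_le_add (degree_C_le (a := v p.1)) (isPencil_FPhi (0, p.2) (j, s))
    · have hLp := congrFun (congrFun hv p) s
      rw [mul_PhiMat_apply] at hLp
      simp only [dotProduct, sub_mul, Finset.sum_sub_distrib, mul_assoc, ← Finset.mul_sum,
        sum_FPhi_zero_mul_phiVec hφ ha hK, hLp, vKron, Matrix.of_apply, sub_self]
  choose w hw using hrow
  refine ⟨fun p q => w p q.2 q.1, ?_⟩
  refine Matrix.ext fun p q => ?_
  rw [liftC_extCols_mul_FPhi_apply v (fun p q => w p q.2 q.1)]
  dsimp only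
  linear_combination congrFun (hw p q.2) q.1

end Anchor

section Nullspace
variable {l m m' : Type*} [Fintype l]

theorem evalC_mul (α : ℂ) (A : Matrix m l ℝ[X]) (B : Matrix l m' ℝ[X]) :
    evalC α (A * B) = evalC α A * evalC α B := by
  ext p q
  simp [evalC, mul_apply]

theorem revMat_liftC_mul (d : ℕ) (E : Matrix m l ℝ) (F : Matrix l m' ℝ[X]) :
    revMat d (liftC E * F) = liftC E * revMat d F := by
  ext p q i
  simp [revMat, liftC, mul_apply, coeff_reflect]

theorem mulVec_evalC_eq_zero_of_eq_liftC_mul [Fintype m'] {E : Matrix m l ℝ} {F : Matrix l m' ℝ[X]}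
    {G : Matrix m m' ℝ[X]} (hG : G = liftC E * F) {α : ℂ} {u : m' → ℂ}
    (hu : evalC α F *ᵥ u = 0) : evalC α G *ᵥ u = 0 := by
  rw [hG, evalC_mul, ← mulVec_mulVec, hu, mulVec_zero]

theorem exists_eq_liftC_mul_of_det_ne_zero [DecidableEq l] {E : Matrix l l ℝ}
    {F G : Matrix l l ℝ[X]} (hG : G = liftC E * F) (hdet : G.det ≠ 0) :
    ∃ E' : Matrix l l ℝ, F = liftC E' * G := by
  have hE : IsUnit E.det := by
    refine isUnit_iff_ne_zero.mpr fun h => hdet ?_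
    rw [hG, det_mul, liftC, ← RingHom.mapMatrix_apply, ← RingHom.map_det, h, map_zero, zero_mul]
  refine ⟨E⁻¹, ?_⟩
  rw [hG, ← mul_assoc, liftC, liftC, ← Matrix.map_mul, nonsing_inv_mul E hE,
    Matrix.map_one _ (map_zero C) (map_one C), one_mul]

end Nullspace

theorem det_diagPI (n K : ℕ) (Pp : Matrix (Fin n) (Fin n) ℝ[X]) :
    (diagPI n (K + 1) Pp).det = Pp.det := by
  rw [twoBlockTriangular_det _ (fun p => p.1 = 0)]
  · let e : {p : Fin (K + 1) × Fin n // p.1 = 0} ≃ Fin n :=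
      ⟨fun p => p.1.2, fun s => ⟨(0, s), rfl⟩, fun p => by ext <;> simp [p.2], fun _ => rfl⟩
    have htop : toSquareBlockProp (diagPI n (K + 1) Pp) (fun p => p.1 = 0) = Pp.submatrix e e := by
      ext p q
      simp [toSquareBlockProp, toBlock, diagPI, p.2, q.2, e]
    have hbot : toSquareBlockProp (diagPI n (K + 1) Pp) (fun p => ¬p.1 = 0) = 1 := by
      ext p q
      simp [toSquareBlockProp, toBlock, diagPI, p.2, one_apply, Subtype.ext_iff]
    rw [htop, hbot, det_submatrix_equiv_self, det_one, mul_one]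
  · intro p hp q hq
    have hpq : p ≠ q := fun h => hp (h ▸ hq)
    simp [diagPI, hp, hpq]

theorem IsLinearization.det_ne_zero {n K : ℕ}
    {L : Matrix (Fin (K + 1) × Fin n) (Fin (K + 1) × Fin n) ℝ[X]} {Pp : Matrix (Fin n) (Fin n) ℝ[X]} (hL : IsLinearization n (K + 1) L Pp) (hP : Pp.det ≠ 0) :
    L.det ≠ 0 := by
  obtain ⟨U, V, -, -, hUV⟩ := hL
  intro h
  apply hP
  rw [← det_diagPI, ← hUV, det_mul, det_mul, h, mul_zero, zero_mul]

theorem statement_6_general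
    (n k : ℕ) (hk : 2 ≤ k)
    (a b c : ℕ → ℝ) (ha : ∀ j, a j ≠ 0)
    (φ : ℕ → Polynomial ℝ) (hφ0 : φ 0 = 1)
    (hφ1 : C (a 0) * φ 1 = (X - C (b 0)) * φ 0)
    (hφrec : ∀ j, C (a (j + 1)) * φ (j + 2) =
      (X - C (b (j + 1))) * φ (j + 1) - C (c (j + 1)) * φ j)
    (Pm : ℕ → Matrix (Fin n) (Fin n) ℝ)
    (hreg : (matP n k φ Pm).det ≠ 0)
    (L : Matrix (Fin k × Fin n) (Fin k × Fin n) (Polynomial ℝ)) (hL : IsPencil L) (v : Fin k → ℝ) (hv : Ansatz1 n k φ Pm L v) :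
    (∀ (α : ℂ) (u : Fin k × Fin n → ℂ),
        (evalC α (FPhi n k a b c Pm)).mulVec u = 0 → (evalC α L).mulVec u = 0) ∧
    (∀ u : Fin k × Fin n → ℂ,
        (evalC 0 (revMat 1 (FPhi n k a b c Pm))).mulVec u = 0 →
          (evalC 0 (revMat 1 L)).mulVec u = 0) ∧
    (IsLinearization n k L (matP n k φ Pm) →
      (∀ (α : ℂ) (u : Fin k × Fin n → ℂ),
          (evalC α L).mulVec u = 0 → (evalC α (FPhi n k a b c Pm)).mulVec u = 0) ∧
      (∀ u : Fin k × Fin n → ℂ,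
          (evalC 0 (revMat 1 L)).mulVec u = 0 →
            (evalC 0 (revMat 1 (FPhi n k a b c Pm))).mulVec u = 0)) := by
  obtain ⟨K, rfl⟩ : ∃ K, k = K + 1 := ⟨k - 1, by omega⟩
  obtain ⟨B, hLB⟩ := exists_eq_liftC_extCols_mul_FPhi ⟨hφ0, hφ1, hφrec⟩ ha (by omega) hL hv
  have hLB_rev : revMat 1 L = liftC (extCols n (K + 1) v B) * revMat 1 (FPhi n (K + 1) a b c Pm) :=
    hLB ▸ revMat_liftC_mul 1 _ _
  refine ⟨fun α u => mulVec_evalC_eq_zero_of_eq_liftC_mul hLB,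
    fun u => mulVec_evalC_eq_zero_of_eq_liftC_mul hLB_rev, fun hlin => ?_⟩
  obtain ⟨E, hFL⟩ := exists_eq_liftC_mul_of_det_ne_zero hLB (hlin.det_ne_zero hreg)
  have hFL_rev : revMat 1 (FPhi n (K + 1) a b c Pm) = liftC E * revMat 1 L :=
    hFL ▸ revMat_liftC_mul 1 _ _
  exact ⟨fun α u => mulVec_evalC_eq_zero_of_eq_liftC_mul hFL,
    fun u => mulVec_evalC_eq_zero_of_eq_liftC_mul hFL_rev⟩

theorem statement_6
    (n k : ℕ) (hn : 0 < n) (hk : 2 ≤ k)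
    (a b c : ℕ → ℝ) (ha : ∀ j, a j ≠ 0)
    (φ : ℕ → Polynomial ℝ) (hφ0 : φ 0 = 1)
    (hφ1 : C (a 0) * φ 1 = (X - C (b 0)) * φ 0)
    (hφrec : ∀ j, C (a (j + 1)) * φ (j + 2) =
      (X - C (b (j + 1))) * φ (j + 1) - C (c (j + 1)) * φ j)
    (Pm : ℕ → Matrix (Fin n) (Fin n) ℝ) (hPk : Pm k ≠ 0)
    (hreg : (matP n k φ Pm).det ≠ 0)
    (L : Matrix (Fin k × Fin n) (Fin k × Fin n) (Polynomial ℝ)) (hL : IsPencil L) (v : Fin k → ℝ) (hv : Ansatz1 n k φ Pm L v) :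
    (∀ (α : ℂ) (u : Fin k × Fin n → ℂ),
        (evalC α (FPhi n k a b c Pm)).mulVec u = 0 → (evalC α L).mulVec u = 0) ∧
    (∀ u : Fin k × Fin n → ℂ,
        (evalC 0 (revMat 1 (FPhi n k a b c Pm))).mulVec u = 0 →
          (evalC 0 (revMat 1 L)).mulVec u = 0) ∧
    (IsLinearization n k L (matP n k φ Pm) →
      (∀ (α : ℂ) (u : Fin k × Fin n → ℂ),
          (evalC α L).mulVec u = 0 → (evalC α (FPhi n k a b c Pm)).mulVec u = 0) ∧
      (∀ u : Fin k × Fin n → ℂ,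
          (evalC 0 (revMat 1 L)).mulVec u = 0 →
            (evalC 0 (revMat 1 (FPhi n k a b c Pm))).mulVec u = 0)) :=
  statement_6_general n k hk a b c ha φ hφ0 hφ1 hφrec Pm hreg L hL v hv
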